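/- arXiv:2006.03009 — 4 statements merged into one kernel-verified Lean document; each statement's English description precedes it below -/
import Mathlib

section
/- For all positive integers s and t with t ≥ 2, every connected graph G that is P_t-free, SDK_s-free, and K_4-free has a dominating set of size at most (1 + R(4, R(4, s)))^(t-2). -/
open SimpleGraph

/-- The Ramsey number `R(k, l)`: the least `N` such that every finite simple graph with at
least `N` vertices contains a clique with `k` vertices or an independent set with `l`
vertices (an independent set of size `l` is a clique of size `l` in the complement). -/
noncomputable def ramseyNumber (k l : ℕ) : ℕ :=
  sInf {N | ∀ (V : Type) [Fintype V] (G : SimpleGraph V),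
    N ≤ Fintype.card V →
      (∃ S : Finset V, G.IsNClique k S) ∨ (∃ S : Finset V, Gᶜ.IsNClique l S)}

/-- The one-subdivision of `K_{1,s}`: a center `Sum.inl ()`, middle vertices
`Sum.inr (Sum.inl i)` and leaves `Sum.inr (Sum.inr i)`; the center is adjacent to every
middle vertex, and the `i`-th middle vertex is adjacent to the `i`-th leaf. -/
def SDK (s : ℕ) : SimpleGraph (Unit ⊕ Fin s ⊕ Fin s) :=
  SimpleGraph.fromRel (fun a b =>
    (∃ i : Fin s, a = Sum.inl () ∧ b = Sum.inr (Sum.inl i)) ∨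
    (∃ i : Fin s, a = Sum.inr (Sum.inl i) ∧ b = Sum.inr (Sum.inr i)))

/-- `G` is `H`-free: no induced subgraph of `G` is isomorphic to `H`. -/
def IsFree {W V : Type*} (H : SimpleGraph W) (G : SimpleGraph V) : Prop :=
  ¬ Nonempty (H ↪g G)

/-!
Fix a vertex `v₀`. Every vertex `u` has a set of fewer than `R(4, R(4, s))` neighbours that
dominates the vertices at distance two from `u`: in a minimal such set every vertex has a
private neighbour at distance two, and two rounds of Ramsey's theorem in the `K₄`-free graph
turn `R(4, R(4, s))` of these vertices with their private neighbours into an induced `SDK_s`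
centred at `u`. Starting from `{v₀}` and adding these sets for every vertex chosen so far
multiplies the size by at most `1 + R(4, R(4, s))` and dominates one more layer of distance
from `v₀`. A shortest path is induced, so in a `P_t`-free graph every vertex is within
distance `t - 2` of `v₀`, and `t - 2` rounds suffice.
-/

open Finset

namespace SimpleGraph

/-- The property defining `ramseyNumber`, relativised to a vertex set `X` so that the induction
needs no induced subgraphs. -/
def IsRamseyBound (k l N : ℕ) : Prop :=
  ∀ {V : Type} (G : SimpleGraph V) (X : Finset V), N ≤ #X →
    (∃ S ⊆ X, G.IsNClique k S) ∨ ∃ S ⊆ X, Gᶜ.IsNClique l S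

lemma IsRamseyBound.succ_succ {k l N₁ N₂ : ℕ} (h₁ : IsRamseyBound k (l + 1) N₁)
    (h₂ : IsRamseyBound (k + 1) l N₂) : IsRamseyBound (k + 1) (l + 1) (N₁ + N₂ + 1) := by
  classical
  intro V G X hX
  obtain ⟨v, hv⟩ : X.Nonempty := card_pos.mp (by omega)
  set A := (X.erase v).filter (G.Adj v)
  set B := (X.erase v).filter (Gᶜ.Adj v)
  have hAX : A ⊆ X := (filter_subset _ _).trans (erase_subset _ _)
  have hBX : B ⊆ X := (filter_subset _ _).trans (erase_subset _ _)
  have hAB : #A + #B + 1 = #X := by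
    have : B = (X.erase v).filter (fun w => ¬ G.Adj v w) :=
      filter_congr fun w hw => by simp [(ne_of_mem_erase hw).symm]
    rw [this, card_filter_add_card_filter_not, card_erase_add_one hv]
  by_cases hA : N₁ ≤ #A
  · rcases h₁ G A hA with ⟨S, hSA, hS⟩ | ⟨S, hSA, hS⟩
    · exact Or.inl ⟨insert v S, insert_subset hv (hSA.trans hAX),
        hS.insert fun w hw => (mem_filter.mp (hSA hw)).2⟩
    · exact Or.inr ⟨S, hSA.trans hAX, hS⟩
  · rcases h₂ G B (by omega) with ⟨S, hSB, hS⟩ | ⟨S, hSB, hS⟩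
    · exact Or.inl ⟨S, hSB.trans hBX, hS⟩
    · exact Or.inr ⟨insert v S, insert_subset hv (hSB.trans hBX),
        hS.insert fun w hw => (mem_filter.mp (hSB hw)).2⟩

lemma exists_isRamseyBound : ∀ k l : ℕ, ∃ N, IsRamseyBound k l N
  | 0, _ => ⟨0, fun _ _ _ => Or.inl ⟨∅, empty_subset _, by simp⟩⟩
  | _ + 1, 0 => ⟨0, fun _ _ _ => Or.inr ⟨∅, empty_subset _, by simp⟩⟩
  | k + 1, l + 1 =>
    have ⟨_, h₁⟩ := exists_isRamseyBound k (l + 1)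
    have ⟨_, h₂⟩ := exists_isRamseyBound (k + 1) l
    ⟨_, h₁.succ_succ h₂⟩

lemma isRamseyBound_ramseyNumber (k l : ℕ) : IsRamseyBound k l (ramseyNumber k l) := by
  obtain ⟨N, hN⟩ := exists_isRamseyBound k l
  have hR : ramseyNumber k l ∈ _ := Nat.sInf_mem ⟨N, fun W _ H hW => by
    rcases hN H univ hW with ⟨S, -, hS⟩ | ⟨S, -, hS⟩
    exacts [Or.inl ⟨S, hS⟩, Or.inr ⟨S, hS⟩]⟩
  intro V G X hX
  let f : X ↪ V := Function.Embedding.subtype _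
  have hcompl : (G.comap f)ᶜ = Gᶜ.comap f := by
    ext a b
    simp only [compl_adj, comap_adj, f.injective.ne_iff]
  rcases hR X (G.comap f) (by simpa using hX) with ⟨S, hS⟩ | ⟨S, hS⟩
  · exact Or.inl ⟨S.map f, map_subtype_subset S, hS.map.mono (map_comap_le f G)⟩
  · rw [hcompl] at hS
    exact Or.inr ⟨S.map f, map_subtype_subset S, hS.map.mono (map_comap_le f Gᶜ)⟩

lemma CliqueFree.exists_isNIndepSet {V : Type} {G : SimpleGraph V} {k l : ℕ}
    (hG : G.CliqueFree k) {X : Finset V} (hX : ramseyNumber k l ≤ #X) :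
    ∃ S ⊆ X, G.IsNIndepSet l S := by
  rcases isRamseyBound_ramseyNumber k l G X hX with ⟨S, -, hS⟩ | ⟨S, hSX, hS⟩
  exacts [(hG S hS).elim, ⟨S, hSX, G.isNClique_compl.mp hS⟩]

section

variable {V : Type*} {G : SimpleGraph V}

lemma Walk.dist_getVert_of_length_eq_dist {u v : V} {p : G.Walk u v}
    (hp : p.length = G.dist u v) {i : ℕ} (hi : i ≤ p.length) : G.dist u (p.getVert i) = i := by
  simpa [hi] using (length_eq_dist_of_subwalk hp (p.isSubwalk_take i)).symm

lemma Connected.exists_adj_dist_eq (hconn : G.Connected) {v w : V} {n : ℕ}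
    (h : G.dist v w = n + 1) : ∃ z, G.dist v z = n ∧ G.Adj z w := by
  obtain ⟨p, hp⟩ := hconn.exists_walk_length_eq_dist v w
  refine ⟨p.getVert n, p.dist_getVert_of_length_eq_dist hp (by omega), ?_⟩
  simpa [show n + 1 = p.length by omega, p.getVert_length] using
    p.adj_getVert_succ (i := n) (by omega)

lemma Walk.nonempty_pathGraph_embedding_of_length_eq_dist {u v : V} {p : G.Walk u v}
    (hp : p.length = G.dist u v) {t : ℕ} (ht : t ≤ p.length + 1) :
    Nonempty (pathGraph t ↪g G) := by
  have hdist (i : Fin t) : G.dist u (p.getVert i) = i :=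
    p.dist_getVert_of_length_eq_dist hp (by omega)
  refine ⟨⟨⟨fun i => p.getVert i, fun i j hij => Fin.ext ?_⟩, fun {i j} => ?_⟩⟩
  · simpa [hdist] using congrArg (G.dist u) hij
  · change G.Adj (p.getVert i) (p.getVert j) ↔ _
    rw [pathGraph_adj]
    constructor
    · intro h
      have hij : (i : ℕ) ≠ j := fun hij => h.ne (by rw [Fin.ext hij])
      have := h.diff_dist_adj (u := u)
      rw [hdist, hdist] at this
      omega
    · rintro (h | h)
      · simpa [h] using p.adj_getVert_succ (i := i) (by omega)
      · simpa [h] using (p.adj_getVert_succ (i := j) (by omega)).symm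

lemma Connected.dist_add_one_lt_of_isFree_pathGraph (hconn : G.Connected) {t : ℕ}
    (hPt : IsFree (pathGraph t) G) (u v : V) : G.dist u v + 1 < t := by
  by_contra! h
  obtain ⟨p, hp⟩ := hconn.exists_walk_length_eq_dist u v
  exact hPt (p.nonempty_pathGraph_embedding_of_length_eq_dist hp (by omega))

lemma Connected.exists_card_le_pow_dominating_ball [DecidableEq V] (hconn : G.Connected)
    (v₀ : V) {r : ℕ} (hloc : ∀ u, ∃ A : Finset V, #A ≤ r ∧
      ∀ w, G.edist u w = 2 → ∃ a ∈ A, G.Adj w a) (n : ℕ) :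
    ∃ D : Finset V, #D ≤ (1 + r) ^ n ∧
      ∀ w, G.dist v₀ w ≤ n + 1 → w ∈ D ∨ ∃ d ∈ D, G.Adj w d := by
  choose A hA_card hA using hloc
  induction n with
  | zero =>
    refine ⟨{v₀}, by simp, fun w hw => ?_⟩
    rcases Nat.le_one_iff_eq_zero_or_eq_one.mp hw with h | h
    · exact Or.inl (by simp [hconn.dist_eq_zero_iff.mp h])
    · exact Or.inr ⟨v₀, mem_singleton_self _, (dist_eq_one_iff_adj.mp h).symm⟩
  | succ n ih =>
    obtain ⟨D, hD_card, hD⟩ := ih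
    refine ⟨D ∪ D.biUnion A, ?_, fun w hw => ?_⟩
    · calc #(D ∪ D.biUnion A) ≤ #D + #(D.biUnion A) := card_union_le _ _
        _ ≤ #D + #D * r := by grw [card_biUnion_le_card_mul _ _ _ fun u _ => hA_card u]
        _ = #D * (1 + r) := by ring
        _ ≤ (1 + r) ^ (n + 1) := by rw [pow_succ]; gcongr
    by_cases hw' : G.dist v₀ w ≤ n + 1
    · rcases hD w hw' with h | ⟨d, hd, hwd⟩
      exacts [Or.inl (mem_union_left _ h), Or.inr ⟨d, mem_union_left _ hd, hwd⟩]
    obtain ⟨z, hz, hzw⟩ := hconn.exists_adj_dist_eq (v := v₀) (w := w) (n := n + 1) (by omega)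
    rcases hD z hz.le with hzD | ⟨d, hd, hzd⟩
    · exact Or.inr ⟨z, mem_union_left _ hzD, hzw.symm⟩
    by_cases hwd : w = d
    · exact Or.inl (mem_union_left _ (hwd ▸ hd))
    by_cases hadj : G.Adj w d
    · exact Or.inr ⟨d, mem_union_left _ hd, hadj⟩
    obtain ⟨a, ha, hwa⟩ := hA d w (edist_eq_two_iff.mpr
      ⟨Ne.symm hwd, fun h => hadj h.symm, z,
        G.mem_commonNeighbors.mpr ⟨hzd.symm, hzw.symm⟩⟩)
    exact Or.inr ⟨a, mem_union_right _ (mem_biUnion.mpr ⟨d, hd, ha⟩), hwa⟩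

lemma exists_dominating_subset_with_private_neighbors (S : Finset V) (W : Set V)
    (hS : ∀ w ∈ W, ∃ a ∈ S, G.Adj w a) :
    ∃ M ⊆ S, (∀ w ∈ W, ∃ a ∈ M, G.Adj w a) ∧
      ∀ x ∈ M, ∃ w ∈ W, G.Adj x w ∧ ∀ y ∈ M, y ≠ x → ¬ G.Adj y w := by
  classical
  induction S using Finset.strongInduction with
  | H S ih =>
    by_cases hpriv : ∀ x ∈ S, ∃ w ∈ W, G.Adj x w ∧ ∀ y ∈ S, y ≠ x → ¬ G.Adj y w
    · exact ⟨S, subset_rfl, hS, hpriv⟩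
    push Not at hpriv
    obtain ⟨x, hx, hx_shared⟩ := hpriv
    have hS' : ∀ w ∈ W, ∃ a ∈ S.erase x, G.Adj w a := by
      intro w hw
      obtain ⟨a, ha, hwa⟩ := hS w hw
      by_cases hax : a = x
      · obtain ⟨y, hy, hyx, hyw⟩ := hx_shared w hw (hax ▸ hwa.symm)
        exact ⟨y, mem_erase.mpr ⟨hyx, hy⟩, hyw.symm⟩
      · exact ⟨a, mem_erase.mpr ⟨hax, ha⟩, hwa⟩
    obtain ⟨M, hM, hM_dom, hM_priv⟩ := ih _ (erase_ssubset hx) hS'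
    exact ⟨M, hM.trans (erase_subset _ _), hM_dom, hM_priv⟩

/-- `c` is the centre, `I` the set of middle vertices and `p x` the leaf attached to `x`. -/
lemma nonempty_sdk_embedding {s : ℕ} {c : V} {I : Finset V} (hI : #I = s) (p : V → V)
    (hcI : ∀ x ∈ I, G.Adj c x) (hcp : ∀ x ∈ I, c ≠ p x ∧ ¬ G.Adj c (p x))
    (hI_ind : G.IsIndepSet I) (hIp : ∀ x ∈ I, ∀ y ∈ I, G.Adj x (p y) ↔ x = y)
    (hpp : ∀ x ∈ I, ∀ y ∈ I, ¬ G.Adj (p x) (p y)) : Nonempty (SDK s ↪g G) := by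
  set e := (I.equivFinOfCardEq hI).symm
  have hm (i : Fin s) : (e i : V) ∈ I := (e i).2
  have hm_inj (i j : Fin s) : (e i : V) = e j ↔ i = j := by simp [Subtype.ext_iff.symm]
  have hl_inj (i j : Fin s) : p (e i) = p (e j) ↔ i = j := by
    refine ⟨fun h => ?_, fun h => h ▸ rfl⟩
    have := (hIp _ (hm i) _ (hm i)).mpr rfl
    rwa [h, hIp _ (hm i) _ (hm j), hm_inj] at this
  have hcm (i : Fin s) : G.Adj c (e i) := hcI _ (hm i)
  have hcl (i : Fin s) : ¬ G.Adj c (p (e i)) := (hcp _ (hm i)).2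
  have hlc (i : Fin s) : p (e i) ≠ c := (hcp _ (hm i)).1.symm
  have hmm (i j : Fin s) : ¬ G.Adj (e i) (e j) := fun h => hI_ind (hm i) (hm j) h.ne h
  have hml (i j : Fin s) : G.Adj (e i) (p (e j)) ↔ i = j := by rw [hIp _ (hm i) _ (hm j), hm_inj]
  have hll (i j : Fin s) : ¬ G.Adj (p (e i)) (p (e j)) := hpp _ (hm i) _ (hm j)
  have hml' (i j : Fin s) : (e i : V) ≠ p (e j) := fun h => hcl j (h ▸ hcm i)
  let f : Unit ⊕ Fin s ⊕ Fin s → V :=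
    Sum.elim (fun _ => c) (Sum.elim (fun i => e i) (fun i => p (e i)))
  refine ⟨⟨⟨f, ?_⟩, fun {a b} => ?_⟩⟩
  · rintro (⟨⟩ | i | i) (⟨⟩ | j | j) h <;>
      simp_all [f, (hcm _).ne, (hcm _).ne', (hml' _ _).symm, (hlc _).symm]
  · change G.Adj (f a) (f b) ↔ _
    rcases a with ⟨⟩ | i | i <;> rcases b with ⟨⟩ | j | j <;>
      simp [SDK, f, hcm, hcl, hmm, hml, hll, G.adj_comm (p _), (hcm _).symm, eq_comm]

end

section

variable {V : Type} {G : SimpleGraph V} {s : ℕ}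

lemma card_lt_ramseyNumber_of_private_neighbors (hSDK : IsFree (SDK s) G)
    (hK4 : G.CliqueFree 4) {u : V} {M : Finset V} (hM : ∀ x ∈ M, G.Adj u x) {p : V → V}
    (hp : ∀ x ∈ M, G.edist u (p x) = 2 ∧ G.Adj x (p x) ∧
      ∀ y ∈ M, y ≠ x → ¬ G.Adj y (p x)) :
    #M < ramseyNumber 4 (ramseyNumber 4 s) := by
  classical
  have hp_inj : Set.InjOn p M := fun x hx y hy hxy =>
    by_contra fun hne => (hp y hy).2.2 x hx hne (hxy ▸ (hp x hx).2.1)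
  by_contra! hM_card
  obtain ⟨J, hJ, hJ_ind⟩ := hK4.exists_isNIndepSet (X := M.image p) (l := ramseyNumber 4 s)
    (by rwa [card_image_of_injOn hp_inj])
  obtain ⟨K, hKM, rfl⟩ := subset_image_iff.mp hJ
  obtain ⟨I, hIK, hI_ind⟩ := hK4.exists_isNIndepSet (X := K) (l := s)
    (by rw [← hJ_ind.card_eq, card_image_of_injOn (hp_inj.mono hKM)])
  have hIM : I ⊆ M := hIK.trans hKM
  have hpK (x) (hx : x ∈ I) : p x ∈ (K.image p : Set V) := by simpa using ⟨x, hIK hx, rfl⟩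
  refine hSDK (nonempty_sdk_embedding hI_ind.card_eq p (fun x hx => hM x (hIM hx))
    (fun x hx => ?_) hI_ind.isIndepSet (fun x hx y hy => ⟨fun h => ?_, ?_⟩)
    (fun x hx y hy h => hJ_ind.isIndepSet (hpK x hx) (hpK y hy) h.ne h))
  · exact ((edist_eq_two_iff.mp (hp x (hIM hx)).1)).imp_right And.left
  · by_contra hne
    exact (hp y (hIM hy)).2.2 x (hIM hx) hne h
  · rintro rfl
    exact (hp x (hIM hx)).2.1

lemma exists_dominating_edist_eq_two [Fintype V] (hSDK : IsFree (SDK s) G)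
    (hK4 : G.CliqueFree 4) (u : V) :
    ∃ A : Finset V, #A < ramseyNumber 4 (ramseyNumber 4 s) ∧
      ∀ w, G.edist u w = 2 → ∃ a ∈ A, G.Adj w a := by
  classical
  obtain ⟨M, hMu, hM_dom, hM_priv⟩ := exists_dominating_subset_with_private_neighbors (G := G)
    (G.neighborFinset u) {w | G.edist u w = 2} fun w hw => by
      obtain ⟨-, -, x, hx⟩ := edist_eq_two_iff.mp hw
      rw [G.mem_commonNeighbors] at hx
      exact ⟨x, (mem_neighborFinset _ _ _).mpr hx.1, hx.2⟩
  choose! p hp using hM_priv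
  exact ⟨M, card_lt_ramseyNumber_of_private_neighbors hSDK hK4
    (fun x hx => (mem_neighborFinset _ _ _).mp (hMu hx)) hp, hM_dom⟩

end

end SimpleGraph

theorem stmt0_general (s t : ℕ)
    (V : Type) [Fintype V] (G : SimpleGraph V)
    (hconn : G.Connected)
    (hPt : IsFree (SimpleGraph.pathGraph t) G)
    (hSDK : IsFree (SDK s) G)
    (hK4 : IsFree (completeGraph (Fin 4)) G) :
    ∃ D : Finset V, (∀ v : V, v ∉ D → ∃ d ∈ D, G.Adj v d) ∧
      D.card ≤ (1 + ramseyNumber 4 (ramseyNumber 4 s)) ^ (t - 2) := by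
  classical
  have hclique : G.CliqueFree 4 := fun S hS => hK4 ⟨topEmbeddingOfNotCliqueFree fun h => h S hS⟩
  obtain ⟨v₀⟩ := hconn.nonempty
  obtain ⟨D, hD_card, hD⟩ := hconn.exists_card_le_pow_dominating_ball v₀
    (fun u => (exists_dominating_edist_eq_two hSDK hclique u).imp fun _ h => h.imp_left le_of_lt)
    (t - 2)
  refine ⟨D, fun w hw => (hD w ?_).resolve_left hw, hD_card⟩
  have := hconn.dist_add_one_lt_of_isFree_pathGraph hPt v₀ w
  omega

theorem stmt0 (s t : ℕ) (hs : 1 ≤ s) (ht : 2 ≤ t)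
    (V : Type) [Fintype V] (G : SimpleGraph V)
    (hconn : G.Connected)
    (hPt : IsFree (SimpleGraph.pathGraph t) G)
    (hSDK : IsFree (SDK s) G)
    (hK4 : IsFree (completeGraph (Fin 4)) G) :
    ∃ D : Finset V, (∀ v : V, v ∉ D → ∃ d ∈ D, G.Adj v d) ∧
      D.card ≤ (1 + ramseyNumber 4 (ramseyNumber 4 s)) ^ (t - 2) :=
  stmt0_general s t V G hconn hPt hSDK hK4
end

section
/- Let s be a positive integer and let G be a graph that is K_4-free and SDK_s-free. Let v be a vertex of G and let X be a set of neighbors of v such that for every x ∈ X there exists a vertex y_x with y_x ≠ v, y_x not adjacent to v, and such that the set of neighbors of y_x inside X is exactly {x}. Then |X| ≤ R(4, R(4, s)). -/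
open SimpleGraph

/-- `nbhd G S` is the set of all vertices having a neighbour in `S`. -/
def nbhd {V : Type*} (G : SimpleGraph V) (S : Set V) : Set V :=
  {v | ∃ s ∈ S, G.Adj s v}

/-!
Since `G` is `K₄`-free, Ramsey's theorem gives an independent set `I ⊆ X` with `R(4, s)`
vertices. Their private neighbours `y_x` are pairwise distinct (each sees exactly one vertex of
`X`), so Ramsey's theorem applied again gives `s` of them forming an independent set. These `s`
vertices `x` and `y_x`, together with `v`, induce `SDK_s`.
-/

open Finset

namespace SimpleGraph

lemma exists_isNClique_succ_of_forall_adj {V : Type*} [DecidableEq V] (G : SimpleGraph V)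
    {n : ℕ} {s t : Finset V} {v : V} (hv : v ∈ s) (hts : t ⊆ s)
    (hadj : ∀ x ∈ t, G.Adj v x) (ht : G.IsNClique n t) :
    ∃ u ⊆ s, G.IsNClique (n + 1) u :=
  ⟨insert v t, insert_subset hv hts, ht.insert hadj⟩

/-- Erdős–Szekeres: `R(k + 1, l + 1) ≤ R(k, l + 1) + R(k + 1, l)`, split along the neighbours
of a vertex. -/
theorem exists_ramsey_bound :
    ∀ k l : ℕ, ∃ N, ∀ {V : Type} (G : SimpleGraph V) (s : Finset V), N ≤ #s →
      (∃ t ⊆ s, G.IsNClique k t) ∨ ∃ t ⊆ s, Gᶜ.IsNClique l t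
  | 0, _ => ⟨0, fun _ _ _ => Or.inl ⟨∅, empty_subset _, by simp⟩⟩
  | _ + 1, 0 => ⟨0, fun _ _ _ => Or.inr ⟨∅, empty_subset _, by simp⟩⟩
  | k + 1, l + 1 => by
    classical
    obtain ⟨A, hA⟩ := exists_ramsey_bound k (l + 1)
    obtain ⟨B, hB⟩ := exists_ramsey_bound (k + 1) l
    refine ⟨A + B + 1, fun G s hs => ?_⟩
    obtain ⟨v, hv⟩ : s.Nonempty := card_pos.1 (by omega)
    set nbrs := (s.erase v).filter (G.Adj v)
    set nonNbrs := (s.erase v).filter (Gᶜ.Adj v)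
    have hsplit : #nbrs + #nonNbrs = #s - 1 := by
      rw [← card_erase_of_mem hv, ← card_filter_add_card_filter_not (s := s.erase v) (G.Adj v)]
      congr 2
      refine filter_congr fun x hx => ?_
      simp [(ne_of_mem_erase hx).symm]
    have hnbrs : nbrs ⊆ s := (filter_subset _ _).trans (erase_subset _ _)
    have hnonNbrs : nonNbrs ⊆ s := (filter_subset _ _).trans (erase_subset _ _)
    by_cases hAle : A ≤ #nbrs
    · rcases hA G nbrs hAle with ⟨t, hts, ht⟩ | ⟨t, hts, ht⟩
      · exact .inl <| G.exists_isNClique_succ_of_forall_adj hv (hts.trans hnbrs)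
          (fun x hx => (mem_filter.1 (hts hx)).2) ht
      · exact .inr ⟨t, hts.trans hnbrs, ht⟩
    · rcases hB G nonNbrs (by omega) with ⟨t, hts, ht⟩ | ⟨t, hts, ht⟩
      · exact .inl ⟨t, hts.trans hnonNbrs, ht⟩
      · exact .inr <| Gᶜ.exists_isNClique_succ_of_forall_adj hv (hts.trans hnonNbrs)
          (fun x hx => (mem_filter.1 (hts hx)).2) ht

theorem ramseyNumber_spec (k l : ℕ) {V : Type} [Fintype V] (G : SimpleGraph V)
    (h : ramseyNumber k l ≤ Fintype.card V) :
    (∃ S : Finset V, G.IsNClique k S) ∨ ∃ S : Finset V, Gᶜ.IsNClique l S := by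
  refine (Nat.sInf_mem ?_ : ramseyNumber k l ∈ _) V G h
  obtain ⟨N, hN⟩ := exists_ramsey_bound k l
  refine ⟨N, fun V _ G hV => ?_⟩
  rcases hN G univ hV with ⟨t, -, ht⟩ | ⟨t, -, ht⟩
  exacts [.inl ⟨t, ht⟩, .inr ⟨t, ht⟩]

theorem exists_isNClique_or_of_ramseyNumber_le {k l : ℕ} {V : Type} (G : SimpleGraph V)
    {s : Finset V} (h : ramseyNumber k l ≤ #s) :
    (∃ t ⊆ s, G.IsNClique k t) ∨ ∃ t ⊆ s, Gᶜ.IsNClique l t := by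
  have hcompl : (G.induce s)ᶜ = Gᶜ.induce s := by
    ext a b
    simp only [compl_adj, comap_adj, Function.Embedding.subtype_apply, ne_eq, Subtype.ext_iff]
  rcases ramseyNumber_spec k l (G.induce s) (by simpa using h) with ⟨S, hS⟩ | ⟨S, hS⟩
  · exact .inl ⟨_, map_subtype_subset S, (isNClique_induce_iff _ _ _).1 hS⟩
  · rw [hcompl] at hS
    exact .inr ⟨_, map_subtype_subset S, (isNClique_induce_iff _ _ _).1 hS⟩

theorem CliqueFree.exists_isNClique_compl_of_ramseyNumber_le {k l : ℕ} {V : Type}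
    {G : SimpleGraph V} (hG : G.CliqueFree k) {s : Finset V} (h : ramseyNumber k l ≤ #s) :
    ∃ t ⊆ s, Gᶜ.IsNClique l t :=
  (G.exists_isNClique_or_of_ramseyNumber_le h).resolve_left fun ⟨t, _, ht⟩ => hG t ht

end SimpleGraph

theorem IsFree.cliqueFree {V : Type*} {G : SimpleGraph V} {n : ℕ}
    (h : IsFree (completeGraph (Fin n)) G) : G.CliqueFree n := by
  by_contra hG
  exact h ⟨topEmbeddingOfNotCliqueFree hG⟩

theorem nonempty_sdk_embedding {V : Type*} {G : SimpleGraph V} {s : ℕ} {v : V}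
    {a b : Fin s → V} (hva : ∀ i, G.Adj v (a i)) (hvb : ∀ i, ¬G.Adj v (b i))
    (hbv : ∀ i, b i ≠ v) (hab : ∀ i j, G.Adj (a i) (b j) ↔ i = j)
    (ha : Pairwise fun i j => ¬G.Adj (a i) (a j))
    (hb : Pairwise fun i j => ¬G.Adj (b i) (b j)) :
    Nonempty (SDK s ↪g G) := by
  have ha' : ∀ i j, ¬G.Adj (a i) (a j) := fun i j => by
    rcases eq_or_ne i j with rfl | hij
    exacts [G.irrefl, ha hij]
  have hb' : ∀ i j, ¬G.Adj (b i) (b j) := fun i j => by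
    rcases eq_or_ne i j with rfl | hij
    exacts [G.irrefl, hb hij]
  have ha_inj : Function.Injective a := fun i j hij =>
    ((hab j i).1 (hij ▸ (hab i i).2 rfl)).symm
  have hb_inj : Function.Injective b := fun i j hij => (hab i j).1 (hij ▸ (hab i i).2 rfl)
  have hab_ne : ∀ i j, a i ≠ b j := fun i j h => hvb j (h ▸ hva i)
  have hinj : Function.Injective (Sum.elim (fun _ : Unit => v) (Sum.elim a b)) :=
    Function.injective_of_subsingleton _ |>.sumElim (ha_inj.sumElim hb_inj hab_ne) <| by
      rintro - (i | i)
      exacts [(hva i).ne, (hbv i).symm]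
  refine ⟨⟨⟨_, hinj⟩, ?_⟩⟩
  rintro (⟨⟩ | i | i) (⟨⟩ | j | j) <;>
    simp [SDK, hva, hvb, ha', hb', hab, G.adj_comm (b _), G.adj_comm _ v, eq_comm]

theorem stmt1_general (s : ℕ) (V : Type) (G : SimpleGraph V)
    (hK4 : IsFree (completeGraph (Fin 4)) G) (hSDK : IsFree (SDK s) G)
    (v : V) (X : Finset V) (hX : ∀ x ∈ X, G.Adj v x)
    (hpriv : ∀ x ∈ X, ∃ y : V, y ≠ v ∧ ¬ G.Adj y v ∧
      {z : V | z ∈ X ∧ G.Adj y z} = {x}) :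
    X.card ≤ ramseyNumber 4 (ramseyNumber 4 s) := by
  classical
  choose! y hyv hvy hyX using hpriv
  have hy : ∀ x ∈ X, ∀ z ∈ X, G.Adj z (y x) ↔ z = x := fun x hx z hz => by
    simpa [hz, G.adj_comm] using Set.ext_iff.1 (hyX x hx) z
  have hy_injOn : Set.InjOn y X := fun x hx x' hx' h =>
    ((hy x' hx' x hx).1 (h ▸ (hy x hx x hx).2 rfl))
  by_contra! hcard
  obtain ⟨I, hIX, hI⟩ := hK4.cliqueFree.exists_isNClique_compl_of_ramseyNumber_le hcard.le
  obtain ⟨J, hJI, hJ⟩ := hK4.cliqueFree.exists_isNClique_compl_of_ramseyNumber_le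
    (s := I.image y) (by rw [card_image_of_injOn (hy_injOn.mono hIX), hI.card_eq])
  obtain ⟨A, hAI, rfl⟩ := subset_image_iff.1 hJI
  have hAX : A ⊆ X := hAI.trans hIX
  have hA : #A = s := by rw [← hJ.card_eq, card_image_of_injOn (hy_injOn.mono hAX)]
  obtain ⟨a, ha_inj, haA⟩ : ∃ a : Fin s → V, Function.Injective a ∧ ∀ i, a i ∈ A :=
    ⟨fun i => (A.equivFinOfCardEq hA).symm i, Subtype.val_injective.comp (Equiv.injective _),
      fun i => Subtype.property _⟩
  have haX i : a i ∈ X := hAX (haA i)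
  have hb_inj : Function.Injective (y ∘ a) := fun i j h => ha_inj (hy_injOn (haX i) (haX j) h)
  refine hSDK (nonempty_sdk_embedding (fun i => hX _ (haX i)) (fun i h => hvy _ (haX i) h.symm)
    (fun i => hyv _ (haX i)) (fun i j => ?_)
    (((isClique_compl G).1 hI.isClique).on_injective ha_inj fun i => hAI (haA i))
    (((isClique_compl G).1 hJ.isClique).on_injective hb_inj fun i => mem_image_of_mem y (haA i)))
  rw [hy _ (haX j) _ (haX i), ha_inj.eq_iff]

theorem stmt1 (s : ℕ) (hs : 1 ≤ s) (V : Type) [Fintype V] (G : SimpleGraph V)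
    (hK4 : IsFree (completeGraph (Fin 4)) G) (hSDK : IsFree (SDK s) G)
    (v : V) (X : Finset V) (hX : ∀ x ∈ X, G.Adj v x)
    (hpriv : ∀ x ∈ X, ∃ y : V, y ≠ v ∧ ¬ G.Adj y v ∧
      {z : V | z ∈ X ∧ G.Adj y z} = {x}) :
    X.card ≤ ramseyNumber 4 (ramseyNumber 4 s) :=
  stmt1_general s V G hK4 hSDK v X hX hpriv
end

section
/- Let G be a graph, let a be a vertex of G, let i ≥ 0 be an integer, and let S be a set of vertices of G such that S ∪ N(S) equals the set of vertices at distance at most i from a. Let X ⊆ N(S) be a set such that every vertex w not in S ∪ N(S) that has a neighbor in N(S) also has a neighbor in X. Then (S ∪ X) ∪ N(S ∪ X) equals the set of vertices at distance at most i + 1 from a. -/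
open SimpleGraph

theorem stmt5 (V : Type) [Fintype V] (G : SimpleGraph V) (a : V) (i : ℕ)
    (S : Set V)
    (hS : S ∪ nbhd G S = {v : V | ∃ p : G.Walk a v, p.length ≤ i})
    (X : Set V) (hX : X ⊆ nbhd G S)
    (hcov : ∀ w : V, w ∉ S ∪ nbhd G S → (∃ b ∈ nbhd G S, G.Adj b w) →
      ∃ x ∈ X, G.Adj x w) :
    (S ∪ X) ∪ nbhd G (S ∪ X) = {v : V | ∃ p : G.Walk a v, p.length ≤ i + 1} := by
  have hmem : ∀ v : V, v ∈ S ∪ nbhd G S ↔ ∃ p : G.Walk a v, p.length ≤ i := by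
    intro v; rw [hS]; rfl
  ext v
  simp only [Set.mem_union, Set.mem_setOf_eq]
  constructor
  · rintro ((hv | hv) | ⟨s, hs, hadj⟩)
    · obtain ⟨p, hp⟩ := (hmem v).1 (Or.inl hv)
      exact ⟨p, hp.trans (Nat.le_succ i)⟩
    · obtain ⟨p, hp⟩ := (hmem v).1 (Or.inr (hX hv))
      exact ⟨p, hp.trans (Nat.le_succ i)⟩
    · have hs' : s ∈ S ∪ nbhd G S := by
        rcases hs with h | h
        · exact Or.inl h
        · exact Or.inr (hX h)
      obtain ⟨p, hp⟩ := (hmem s).1 hs'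
      exact ⟨p.concat hadj, by simp [SimpleGraph.Walk.length_concat]; omega⟩
  · rintro ⟨p, hp⟩
    by_cases hle : p.length ≤ i
    · rcases (hmem v).2 ⟨p, hle⟩ with h | ⟨s, hsS, hadj⟩
      · exact Or.inl (Or.inl h)
      · exact Or.inr ⟨s, Or.inl hsS, hadj⟩
    · -- p.length = i + 1; take the last edge
      obtain ⟨u, q, h, hq⟩ : ∃ (u : V) (q : G.Walk a u) (h : G.Adj u v),
          p = q.concat h := by
        cases hr : p.reverse with
        | nil =>
          exfalso
          have : p.length = 0 := by
            have := congrArg SimpleGraph.Walk.length hr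
            simpa using this
          omega
        | cons h q =>
          refine ⟨_, q.reverse, h.symm, ?_⟩
          have := congrArg SimpleGraph.Walk.reverse hr
          simpa [SimpleGraph.Walk.concat_eq_append] using this
      have hqlen : q.length ≤ i := by
        have := congrArg SimpleGraph.Walk.length hq
        simp [SimpleGraph.Walk.length_concat] at this
        omega
      rcases (hmem u).2 ⟨q, hqlen⟩ with hu | hu
      · exact Or.inr ⟨u, Or.inl hu, h⟩
      · by_cases hv : v ∈ S ∪ nbhd G S
        · rcases hv with h' | ⟨s, hsS, hadj⟩
          · exact Or.inl (Or.inl h')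
          · exact Or.inr ⟨s, Or.inl hsS, hadj⟩
        · obtain ⟨x, hx, hadj⟩ := hcov v hv ⟨u, hu, h⟩
          exact Or.inr ⟨x, Or.inr hx, hadj⟩
end

section
/- Let s be a positive integer and let G be a K_4-free graph on at least R(4, R(4, s)) + 1 vertices such that for every vertex there is an associated 'private' vertex system as follows: G has a vertex set X = {x_1, …, x_K} with K > R(4, R(4, s)) and vertices y_1, …, y_K such that each y_j has neighbor set inside X exactly {x_j}. Then there exist an independent subset X'' ⊆ X of size s and an independent set Y'' among the corresponding vertices y_j such that each y_j ∈ Y'' has exactly one neighbor in X'', namely its associated x_j. -/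
open SimpleGraph

/-! Ramsey's theorem is applied twice. As `G` is `K₄`-free and `K > R(4, R(4, s))`, some `R(4, s)`
of the `x j` are pairwise non-adjacent; the `y j` are distinct, since `y j` sees only `x j` in `X`,
so among the corresponding `y j` some `s` are pairwise non-adjacent. The private-neighbour condition
on all of `X` restricts to the chosen indices. -/

open Finset

namespace SimpleGraph

variable {V W : Type*}

/-- The Erdős–Szekeres bound `R(k + 1, l + 1) ≤ R(k, l + 1) + R(k + 1, l)`; it shows that the set
defining `ramseyNumber` is nonempty. -/
def ramseyBound : ℕ → ℕ → ℕ
  | 0, _ => 0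
  | _ + 1, 0 => 0
  | k + 1, l + 1 => ramseyBound k (l + 1) + ramseyBound (k + 1) l + 1

section Finset

variable [DecidableEq V] {G H : SimpleGraph V} [DecidableRel G.Adj] [DecidableRel H.Adj]
  {A S : Finset V} {v : V} {k : ℕ}

lemma card_filter_adj_add_card_filter_compl_adj (hv : v ∈ A) :
    #{u ∈ A | G.Adj v u} + #{u ∈ A | Gᶜ.Adj v u} + 1 = #A := by
  have hcompl : {u ∈ A | Gᶜ.Adj v u} = {u ∈ A | ¬G.Adj v u}.erase v := by
    ext u
    simp only [mem_filter, mem_erase, compl_adj]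
    tauto
  have hv' : v ∈ {u ∈ A | ¬G.Adj v u} := mem_filter.2 ⟨hv, G.irrefl⟩
  rw [hcompl, add_assoc, card_erase_add_one hv', card_filter_add_card_filter_not]

lemma exists_isNClique_succ_of_subset_filter_adj (hv : v ∈ A)
    (hSA : S ⊆ {u ∈ A | H.Adj v u}) (hS : H.IsNClique k S) :
    ∃ S' ⊆ A, H.IsNClique (k + 1) S' :=
  ⟨insert v S, insert_subset hv (hSA.trans (filter_subset _ _)),
    hS.insert fun _ hb => (mem_filter.1 (hSA hb)).2⟩

end Finset

theorem exists_isNClique_or_isNIndepSet_of_ramseyBound_le (G : SimpleGraph V) :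
    ∀ (k l : ℕ) (A : Finset V), ramseyBound k l ≤ #A →
      (∃ S ⊆ A, G.IsNClique k S) ∨ (∃ S ⊆ A, G.IsNIndepSet l S)
  | 0, _, _, _ => Or.inl ⟨∅, empty_subset _, by simp⟩
  | _ + 1, 0, _, _ => Or.inr ⟨∅, empty_subset _, by simp [isNIndepSet_iff]⟩
  | k + 1, l + 1, A, hA => by
    classical
    rw [ramseyBound] at hA
    obtain ⟨v, hv⟩ : A.Nonempty := card_pos.1 (by omega)
    have hsplit := card_filter_adj_add_card_filter_compl_adj (G := G) hv
    obtain h | h : ramseyBound k (l + 1) ≤ #{u ∈ A | G.Adj v u} ∨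
        ramseyBound (k + 1) l ≤ #{u ∈ A | Gᶜ.Adj v u} := by omega
    · rcases exists_isNClique_or_isNIndepSet_of_ramseyBound_le G k (l + 1) _ h
        with ⟨S, hSA, hS⟩ | ⟨S, hSA, hS⟩
      · exact Or.inl (exists_isNClique_succ_of_subset_filter_adj hv hSA hS)
      · exact Or.inr ⟨S, hSA.trans (filter_subset _ _), hS⟩
    · rcases exists_isNClique_or_isNIndepSet_of_ramseyBound_le G (k + 1) l _ h
        with ⟨S, hSA, hS⟩ | ⟨S, hSA, hS⟩
      · exact Or.inl ⟨S, hSA.trans (filter_subset _ _), hS⟩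
      · obtain ⟨S', hS'A, hS'⟩ :=
          exists_isNClique_succ_of_subset_filter_adj hv hSA ((isNClique_compl G).2 hS)
        exact Or.inr ⟨S', hS'A, (isNClique_compl G).1 hS'⟩
termination_by k l => k + l

theorem exists_isNClique_or_isNIndepSet_of_ramseyNumber_le {k l : ℕ} {V : Type} [Fintype V]
    (G : SimpleGraph V) (h : ramseyNumber k l ≤ Fintype.card V) :
    (∃ S : Finset V, G.IsNClique k S) ∨ ∃ S : Finset V, G.IsNIndepSet l S := by
  have hbound : ramseyBound k l ∈ {N | ∀ (V : Type) [Fintype V] (G : SimpleGraph V),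
      N ≤ Fintype.card V →
        (∃ S : Finset V, G.IsNClique k S) ∨ (∃ S : Finset V, Gᶜ.IsNClique l S)} := by
    intro V _ G hV
    simpa using exists_isNClique_or_isNIndepSet_of_ramseyBound_le G k l univ (by simpa using hV)
  simpa using Nat.sInf_mem ⟨_, hbound⟩ V G h

theorem CliqueFree.exists_subset_isNIndepSet {W : Type} {G : SimpleGraph W} {k l : ℕ}
    (hG : G.CliqueFree k) (A : Finset W) (hA : ramseyNumber k l ≤ #A) :
    ∃ T ⊆ A, G.IsNIndepSet l T := by
  have hAG : (G.induce (A : Set W)).CliqueFree k := hG.comap (Embedding.induce _).isContained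
  obtain ⟨T, hT⟩ | ⟨T, hT⟩ :=
    exists_isNClique_or_isNIndepSet_of_ramseyNumber_le (G.induce (A : Set W)) (by simpa using hA)
  · exact absurd hT (hAG T)
  · refine ⟨T.map (Function.Embedding.subtype _), coe_subset.1 (map_subtype_subset T), ?_,
      by simp [hT.card_eq]⟩
    rw [coe_map, Function.Embedding.coe_subtype, isIndepSet_iff,
      Subtype.val_injective.injOn.pairwise_image]
    exact hT.isIndepSet

theorem CliqueFree.comap_of_injective {G : SimpleGraph V} {n : ℕ} (hG : G.CliqueFree n)
    {f : W → V} (hf : Function.Injective f) : (G.comap f).CliqueFree n :=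
  hG.comap (Embedding.comap ⟨f, hf⟩ G).isContained

theorem cliqueFree_of_isFree {G : SimpleGraph V} {n : ℕ}
    (hG : IsFree (completeGraph (Fin n)) G) : G.CliqueFree n :=
  cliqueFree_iff.2 ⟨fun f => hG ⟨⟨f.toEmbedding, fun {v w} =>
    ⟨fun h => by simpa using h.ne, f.toHom.map_adj⟩⟩⟩⟩

theorem adj_iff_eq_of_setOf_adj_range_eq {G : SimpleGraph V} {ι : Type*} {x y : ι → V}
    (hx : Function.Injective x) (h : ∀ j, {z | z ∈ Set.range x ∧ G.Adj (y j) z} = {x j})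
    (i j : ι) : G.Adj (y j) (x i) ↔ i = j := by
  simpa [hx.eq_iff] using congrArg (x i ∈ ·) (h j)

end SimpleGraph

open SimpleGraph

theorem stmt11_general (s : ℕ) (V : Type) (G : SimpleGraph V)
    (hK4 : IsFree (completeGraph (Fin 4)) G)
    (K : ℕ) (hK : ramseyNumber 4 (ramseyNumber 4 s) < K)
    (x : Fin K → V) (hxinj : Function.Injective x)
    (y : Fin K → V)
    (hnbr : ∀ j : Fin K, {z : V | z ∈ Set.range x ∧ G.Adj (y j) z} = {x j}) :
    ∃ T : Finset (Fin K), T.card = s ∧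
      (∀ i ∈ T, ∀ j ∈ T, i ≠ j → ¬ G.Adj (x i) (x j)) ∧
      (∀ i ∈ T, ∀ j ∈ T, i ≠ j → ¬ G.Adj (y i) (y j)) ∧
      ∀ j ∈ T, {z : V | z ∈ x '' (T : Set (Fin K)) ∧ G.Adj (y j) z} = {x j} := by
  have hG : G.CliqueFree 4 := cliqueFree_of_isFree hK4
  have hadj := adj_iff_eq_of_setOf_adj_range_eq hxinj hnbr
  have hyinj : Function.Injective y := fun i j hij => (hadj i j).1 (hij ▸ (hadj i i).2 rfl)
  obtain ⟨S, -, hS⟩ := (hG.comap_of_injective hxinj).exists_subset_isNIndepSet univ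
    (by simpa using hK.le)
  obtain ⟨T, hTS, hT⟩ := (hG.comap_of_injective hyinj).exists_subset_isNIndepSet S hS.card_eq.ge
  refine ⟨T, hT.card_eq, fun i hi j hj => hS.isIndepSet (hTS hi) (hTS hj),
    fun i hi j hj => hT.isIndepSet hi hj, fun j hj => Set.ext fun z => ⟨?_, ?_⟩⟩
  · rintro ⟨⟨i, -, rfl⟩, hij⟩
    rw [(hadj i j).1 hij]
    rfl
  · rintro rfl
    exact ⟨⟨j, hj, rfl⟩, (hadj j j).2 rfl⟩

theorem stmt11 (s : ℕ) (hs : 1 ≤ s) (V : Type) [Fintype V] (G : SimpleGraph V)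
    (hK4 : IsFree (completeGraph (Fin 4)) G)
    (hcard : ramseyNumber 4 (ramseyNumber 4 s) + 1 ≤ Fintype.card V)
    (K : ℕ) (hK : ramseyNumber 4 (ramseyNumber 4 s) < K)
    (x : Fin K → V) (hxinj : Function.Injective x)
    (y : Fin K → V)
    (hnbr : ∀ j : Fin K, {z : V | z ∈ Set.range x ∧ G.Adj (y j) z} = {x j}) :
    ∃ T : Finset (Fin K), T.card = s ∧
      (∀ i ∈ T, ∀ j ∈ T, i ≠ j → ¬ G.Adj (x i) (x j)) ∧
      (∀ i ∈ T, ∀ j ∈ T, i ≠ j → ¬ G.Adj (y i) (y j)) ∧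
      ∀ j ∈ T, {z : V | z ∈ x '' (T : Set (Fin K)) ∧ G.Adj (y j) z} = {x j} :=
  stmt11_general s V G hK4 K hK x hxinj y hnbr
end
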